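/- For all integers k and l with l > k ≥ 3, the coefficients c8, c6, c4, c2, c0 are all strictly positive and the coefficients c7, c5, c3, c1 are all strictly negative. -/
import Mathlib


/-- Coefficient `c8` of the eliminant polynomial `p` in the variable `x3`. -/
def c8 (k l : ℝ) : ℝ :=
  4 * (2 * k + l - 1) * (2 * k ^ 2 + 2 * k * l + l * (l - 1))
    * (3 * k ^ 2 + 2 * k * l + l ^ 2 - 2 * k - l) ^ 2

/-- Coefficient `c7` of the eliminant polynomial `p`. -/
def c7 (k l : ℝ) : ℝ :=
  -16 * (2 * k + l - 2) * (3 * k ^ 2 + (2 * k + l) * (l - 1))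
    * (3 * k ^ 4 + (12 * l - 2) * k ^ 3 + (14 * l ^ 2 - 10 * l) * k ^ 2
      + (l ^ 2 * (8 * l - 10) + 2 * l) * k + 2 * l ^ 3 * (l - 2) + 2 * l ^ 2)

/-- Coefficient `c6` of the eliminant polynomial `p`. -/
def c6 (k l : ℝ) : ℝ :=
  160 * k ^ 7 + (1928 * l - 1000) * k ^ 6 + (5492 * l ^ 2 - 6764 * l + 1408) * k ^ 5
    + (7644 * l ^ 3 - 15830 * l ^ 2 + 7818 * l - 736) * k ^ 4
    + (6201 * l ^ 4 - 18266 * l ^ 3 + 15881 * l ^ 2 - 3848 * l + 128) * k ^ 3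
    + (3072 * l ^ 5 - 11752 * l ^ 4 + 14848 * l ^ 3 - 6912 * l ^ 2 + 808 * l) * k ^ 2
    + (880 * l ^ 6 - 4208 * l ^ 5 + 7012 * l ^ 4 - 4824 * l ^ 3 + 1204 * l ^ 2 - 64 * l) * k
    + 112 * l ^ 7 - 664 * l ^ 6 + 1432 * l ^ 5 - 1352 * l ^ 4 + 504 * l ^ 3 - 32 * l ^ 2

/-- Coefficient `c5` of the eliminant polynomial `p`. -/
def c5 (k l : ℝ) : ℝ :=
  -4 * (2 * k + l - 2) * ((128 * l - 108) * k ^ 5 + (582 * l ^ 2 - 725 * l + 144) * k ^ 4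
    + (921 * l ^ 3 - 1857 * l ^ 2 + 800 * l - 48) * k ^ 3
    + (736 * l ^ 4 - 2072 * l ^ 3 + 1600 * l ^ 2 - 324 * l) * k ^ 2
    + (312 * l ^ 5 - 1152 * l ^ 4 + 1292 * l ^ 3 - 484 * l ^ 2 + 48 * l) * k
    + 56 * l ^ 6 - 268 * l ^ 5 + 424 * l ^ 4 - 252 * l ^ 3 + 40 * l ^ 2)

/-- Coefficient `c4` of the eliminant polynomial `p`. -/
def c4 (k l : ℝ) : ℝ :=
  (200 * l - 320) * k ^ 6 + (2448 * l ^ 2 - 4584 * l + 1712) * k ^ 5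
    + (6812 * l ^ 3 - 18568 * l ^ 2 + 13190 * l - 2216) * k ^ 4
    + (8618 * l ^ 4 - 32023 * l ^ 3 + 36747 * l ^ 2 - 13648 * l + 1056) * k ^ 3
    + (5781 * l ^ 5 - 27998 * l ^ 4 + 45785 * l ^ 3 - 29060 * l ^ 2 + 6104 * l - 160) * k ^ 2
    + (2000 * l ^ 6 - 12260 * l ^ 5 + 27136 * l ^ 4 - 25936 * l ^ 3 + 9932 * l ^ 2
        - 1120 * l) * k
    + 280 * l ^ 7 - 2120 * l ^ 6 + 6124 * l ^ 5 - 8336 * l ^ 4 + 5284 * l ^ 3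
    - 1280 * l ^ 2 + 64 * l

/-- Coefficient `c3` of the eliminant polynomial `p`. -/
def c3 (k l : ℝ) : ℝ :=
  -2 * (l - 2) * (2 * k + l - 2) * ((128 * l - 108) * k ^ 4
    + (582 * l ^ 2 - 725 * l + 144) * k ^ 3
    + (842 * l ^ 3 - 1694 * l ^ 2 + 716 * l - 48) * k ^ 2
    + (512 * l ^ 4 - 1560 * l ^ 3 + 1232 * l ^ 2 - 244 * l) * k
    + 112 * l ^ 5 - 480 * l ^ 4 + 632 * l ^ 3 - 280 * l ^ 2 + 32 * l)

/-- Coefficient `c2` of the eliminant polynomial `p`. -/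
def c2 (k l : ℝ) : ℝ :=
  2 * (l - 2) ^ 2 * (20 * k ^ 5 + (241 * l - 125) * k ^ 4
    + (659 * l ^ 2 - 800 * l + 158) * k ^ 3
    + (703 * l ^ 3 - 1593 * l ^ 2 + 820 * l - 68) * k ^ 2
    + (328 * l ^ 4 - 1156 * l ^ 3 + 1168 * l ^ 2 - 336 * l + 8) * k
    + 56 * l ^ 5 - 276 * l ^ 4 + 448 * l ^ 3 - 268 * l ^ 2 + 48 * l)

/-- Coefficient `c1` of the eliminant polynomial `p`. -/
def c1 (k l : ℝ) : ℝ :=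
  -2 * (l - 2) ^ 3 * (2 * k + l - 2) * (3 * k + 2 * l - 2)
    * (3 * k ^ 2 + 2 * k * (6 * l - 1) + 4 * l * (2 * l - 1))

/-- Coefficient `c0` of the eliminant polynomial `p`. -/
def c0 (k l : ℝ) : ℝ :=
  (l - 2) ^ 4 * (k + l) * (3 * k + 2 * l - 2) ^ 2

/-- The degree-8 eliminant polynomial `p` in the variable `x3`, obtained via a Gröbner
basis computation with lexicographic order `z > x12 > x3`, whose roots give the
`x3`-values of non-naturally reductive Einstein metrics on `SO(2k+l)`. -/
def ppoly (k l t : ℝ) : ℝ :=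
  c8 k l * t ^ 8 + c7 k l * t ^ 7 + c6 k l * t ^ 6 + c5 k l * t ^ 5 + c4 k l * t ^ 4
    + c3 k l * t ^ 3 + c2 k l * t ^ 2 + c1 k l * t + c0 k l

lemma aux_c8 (a b : ℝ) (ha : 0 ≤ a) (hb : 0 ≤ b) : 0 < c8 (a+3) (a+b+4) := by
  have h : c8 (a+3) (a+b+4) = 6316056 + 5103324*b + 1849752*b^2 + 387528*b^3 + 50560*b^4 + 4104*b^5 + 192*b^6 + 4*b^7 + 14164956*a + 9766224*a*b + 2937912*a*b^2 + 490448*a*b^3 + 47800*a*b^4 + 2576*a*b^5 + 60*a*b^6 + 13606704*a^2 + 7783128*a^2*b + 1865536*a^2*b^2 + 232648*a^2*b^3 + 15056*a^2*b^4 + 404*a^2*b^5 + 7256952*a^3 + 3306288*a^3*b + 591992*a^3*b^2 + 49024*a^3*b^3 + 1580*a^3*b^4 + 2320776*a^4 + 789596*a^4*b + 93880*a^4*b^2 + 3872*a^4*b^3 + 445020*a^5 + 100512*a^5*b + 5952*a^5*b^2 + 47376*a^6 + 5328*a^6*b + 2160*a^7 := by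
    unfold c8; ring
  nlinarith [h, (by positivity : (0:ℝ) < 6316056 + 5103324*b + 1849752*b^2 + 387528*b^3 + 50560*b^4 + 4104*b^5 + 192*b^6 + 4*b^7 + 14164956*a + 9766224*a*b + 2937912*a*b^2 + 490448*a*b^3 + 47800*a*b^4 + 2576*a*b^5 + 60*a*b^6 + 13606704*a^2 + 7783128*a^2*b + 1865536*a^2*b^2 + 232648*a^2*b^3 + 15056*a^2*b^4 + 404*a^2*b^5 + 7256952*a^3 + 3306288*a^3*b + 591992*a^3*b^2 + 49024*a^3*b^3 + 1580*a^3*b^4 + 2320776*a^4 + 789596*a^4*b + 93880*a^4*b^2 + 3872*a^4*b^3 + 445020*a^5 + 100512*a^5*b + 5952*a^5*b^2 + 47376*a^6 + 5328*a^6*b + 2160*a^7)]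

lemma aux_c6 (a b : ℝ) (ha : 0 ≤ a) (hb : 0 ≤ b) : 0 < c6 (a+3) (a+b+4) := by
  have h : c6 (a+3) (a+b+4) = 71184672 + 72708486*b + 31707293*b^2 + 7712894*b^3 + 1135583*b^4 + 101512*b^5 + 5112*b^6 + 112*b^7 + 161718486*a + 141673718*a*b + 51500981*a*b^2 + 10024038*a*b^3 + 1107167*a*b^4 + 66016*a*b^5 + 1664*a*b^6 + 157023457*a^2 + 114725956*a^2*b + 33376965*a^2*b^2 + 4873210*a^2*b^3 + 358897*a^2*b^4 + 10704*a^2*b^5 + 84471037*a^3 + 49421716*a^3*b + 10788789*a^3*b^2 + 1050346*a^3*b^3 + 38681*a^3*b^4 + 27190358*a^4 + 11945006*a^4*b + 1739414*a^4*b^2 + 84688*a^4*b^3 + 5237052*a^5 + 1535846*a^5*b + 111902*a^5*b^2 + 558857*a^6 + 82072*a^6*b + 25489*a^7 := by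
    unfold c6; ring
  nlinarith [h, (by positivity : (0:ℝ) < 71184672 + 72708486*b + 31707293*b^2 + 7712894*b^3 + 1135583*b^4 + 101512*b^5 + 5112*b^6 + 112*b^7 + 161718486*a + 141673718*a*b + 51500981*a*b^2 + 10024038*a*b^3 + 1107167*a*b^4 + 66016*a*b^5 + 1664*a*b^6 + 157023457*a^2 + 114725956*a^2*b + 33376965*a^2*b^2 + 4873210*a^2*b^3 + 358897*a^2*b^4 + 10704*a^2*b^5 + 84471037*a^3 + 49421716*a^3*b + 10788789*a^3*b^2 + 1050346*a^3*b^3 + 38681*a^3*b^4 + 27190358*a^4 + 11945006*a^4*b + 1739414*a^4*b^2 + 84688*a^4*b^3 + 5237052*a^5 + 1535846*a^5*b + 111902*a^5*b^2 + 558857*a^6 + 82072*a^6*b + 25489*a^7)]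

lemma aux_c4 (a b : ℝ) (ha : 0 ≤ a) (hb : 0 ≤ b) : 0 < c4 (a+3) (a+b+4) := by
  have h : c4 (a+3) (a+b+4) = 54604912 + 72855622*b + 39931841*b^2 + 11781988*b^3 + 2039636*b^4 + 208573*b^5 + 11720*b^6 + 280*b^7 + 130334534*a + 148156522*a*b + 67446693*a*b^2 + 15895897*a*b^3 + 2063219*a*b^4 + 140746*a*b^5 + 3960*a*b^6 + 132585817*a^2 + 124936394*a^2*b + 45372922*a^2*b^2 + 8010556*a^2*b^3 + 693114*a^2*b^4 + 23661*a^2*b^5 + 74524089*a^3 + 55923593*a^3*b + 15196315*a^3*b^2 + 1787005*a^3*b^3 + 77323*a^3*b^4 + 24999316*a^4 + 14014595*a^4*b + 2533887*a^4*b^2 + 148894*a^4*b^3 + 5005374*a^5 + 1864405*a^5*b + 168282*a^5*b^2 + 553915*a^6 + 102869*a^6*b + 26139*a^7 := by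
    unfold c4; ring
  nlinarith [h, (by positivity : (0:ℝ) < 54604912 + 72855622*b + 39931841*b^2 + 11781988*b^3 + 2039636*b^4 + 208573*b^5 + 11720*b^6 + 280*b^7 + 130334534*a + 148156522*a*b + 67446693*a*b^2 + 15895897*a*b^3 + 2063219*a*b^4 + 140746*a*b^5 + 3960*a*b^6 + 132585817*a^2 + 124936394*a^2*b + 45372922*a^2*b^2 + 8010556*a^2*b^3 + 693114*a^2*b^4 + 23661*a^2*b^5 + 74524089*a^3 + 55923593*a^3*b + 15196315*a^3*b^2 + 1787005*a^3*b^3 + 77323*a^3*b^4 + 24999316*a^4 + 14014595*a^4*b + 2533887*a^4*b^2 + 148894*a^4*b^3 + 5005374*a^5 + 1864405*a^5*b + 168282*a^5*b^2 + 553915*a^6 + 102869*a^6*b + 26139*a^7)]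

lemma aux_c2 (a b : ℝ) (ha : 0 ≤ a) (hb : 0 ≤ b) : 0 < c2 (a+3) (a+b+4) := by
  have h : c2 (a+3) (a+b+4) = 4584712 + 8341040*b + 6103978*b^2 + 2329314*b^3 + 503752*b^4 + 62262*b^5 + 4104*b^6 + 112*b^7 + 12060224*a + 18448580*a*b + 11060258*a*b^2 + 3332928*a*b^3 + 535684*a*b^4 + 43868*a*b^5 + 1440*a*b^6 + 13472122*a^2 + 16860750*a^2*b + 7961000*a^2*b^2 + 1778096*a^2*b^3 + 188952*a^2*b^4 + 7694*a^2*b^5 + 8284766*a^3 + 8152096*a^3*b + 2845728*a^3*b^2 + 419208*a^3*b^3 + 22108*a^3*b^4 + 3029384*a^4 + 2199634*a^4*b + 505238*a^4*b^2 + 36854*a^4*b^3 + 658740*a^5 + 314104*a^5*b + 35646*a^5*b^2 + 78886*a^6 + 18548*a^6*b + 4014*a^7 := by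
    unfold c2; ring
  nlinarith [h, (by positivity : (0:ℝ) < 4584712 + 8341040*b + 6103978*b^2 + 2329314*b^3 + 503752*b^4 + 62262*b^5 + 4104*b^6 + 112*b^7 + 12060224*a + 18448580*a*b + 11060258*a*b^2 + 3332928*a*b^3 + 535684*a*b^4 + 43868*a*b^5 + 1440*a*b^6 + 13472122*a^2 + 16860750*a^2*b + 7961000*a^2*b^2 + 1778096*a^2*b^3 + 188952*a^2*b^4 + 7694*a^2*b^5 + 8284766*a^3 + 8152096*a^3*b + 2845728*a^3*b^2 + 419208*a^3*b^3 + 22108*a^3*b^4 + 3029384*a^4 + 2199634*a^4*b + 505238*a^4*b^2 + 36854*a^4*b^3 + 658740*a^5 + 314104*a^5*b + 35646*a^5*b^2 + 78886*a^6 + 18548*a^6*b + 4014*a^7)]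

lemma aux_c0 (a b : ℝ) (ha : 0 ≤ a) (hb : 0 ≤ b) : 0 < c0 (a+3) (a+b+4) := by
  have h : c0 (a+3) (a+b+4) = 25200 + 60720*b + 59848*b^2 + 30960*b^3 + 8975*b^4 + 1445*b^5 + 120*b^6 + 4*b^7 + 74400*a + 150800*a*b + 121144*a*b^2 + 48868*a*b^3 + 10336*a*b^4 + 1082*a*b^5 + 44*a*b^6 + 93400*a^2 + 154640*a^2*b + 97098*a^2*b^2 + 28622*a^2*b^3 + 3931*a^2*b^4 + 201*a^2*b^5 + 64600*a^3 + 83780*a^3*b + 38516*a^3*b^2 + 7376*a^3*b^3 + 494*a^3*b^4 + 26575*a^4 + 25285*a^4*b + 7562*a^4*b^2 + 706*a^4*b^3 + 6500*a^5 + 4030*a^5*b + 588*a^5*b^2 + 875*a^6 + 265*a^6*b + 50*a^7 := by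
    unfold c0; ring
  nlinarith [h, (by positivity : (0:ℝ) < 25200 + 60720*b + 59848*b^2 + 30960*b^3 + 8975*b^4 + 1445*b^5 + 120*b^6 + 4*b^7 + 74400*a + 150800*a*b + 121144*a*b^2 + 48868*a*b^3 + 10336*a*b^4 + 1082*a*b^5 + 44*a*b^6 + 93400*a^2 + 154640*a^2*b + 97098*a^2*b^2 + 28622*a^2*b^3 + 3931*a^2*b^4 + 201*a^2*b^5 + 64600*a^3 + 83780*a^3*b + 38516*a^3*b^2 + 7376*a^3*b^3 + 494*a^3*b^4 + 26575*a^4 + 25285*a^4*b + 7562*a^4*b^2 + 706*a^4*b^3 + 6500*a^5 + 4030*a^5*b + 588*a^5*b^2 + 875*a^6 + 265*a^6*b + 50*a^7)]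

lemma aux_c7 (a b : ℝ) (ha : 0 ≤ a) (hb : 0 ≤ b) : c7 (a+3) (a+b+4) < 0 := by
  have h : -(c7 (a+3) (a+b+4)) = 32897664 + 29826000*b + 11811600*b^2 + 2655472*b^3 + 366560*b^4 + 31104*b^5 + 1504*b^6 + 32*b^7 + 74008944*a + 57472032*a*b + 18943440*a*b^2 + 3402336*a*b^3 + 351744*a*b^4 + 19872*a*b^5 + 480*a*b^6 + 71234640*a^2 + 46071296*a^2*b + 12134016*a^2*b^2 + 1632160*a^2*b^3 + 112320*a^2*b^4 + 3168*a^2*b^5 + 38025984*a^3 + 19666528*a^3*b + 3880288*a^3*b^2 + 347456*a^3*b^3 + 11936*a^3*b^4 + 12158048*a^4 + 4714896*a^4*b + 619504*a^4*b^2 + 27696*a^4*b^3 + 2328240*a^5 + 601920*a^5*b + 39504*a^5*b^2 + 247248*a^6 + 31968*a^6*b + 11232*a^7 := by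
    unfold c7; ring
  nlinarith [h, (by positivity : (0:ℝ) < 32897664 + 29826000*b + 11811600*b^2 + 2655472*b^3 + 366560*b^4 + 31104*b^5 + 1504*b^6 + 32*b^7 + 74008944*a + 57472032*a*b + 18943440*a*b^2 + 3402336*a*b^3 + 351744*a*b^4 + 19872*a*b^5 + 480*a*b^6 + 71234640*a^2 + 46071296*a^2*b + 12134016*a^2*b^2 + 1632160*a^2*b^3 + 112320*a^2*b^4 + 3168*a^2*b^5 + 38025984*a^3 + 19666528*a^3*b + 3880288*a^3*b^2 + 347456*a^3*b^3 + 11936*a^3*b^4 + 12158048*a^4 + 4714896*a^4*b + 619504*a^4*b^2 + 27696*a^4*b^3 + 2328240*a^5 + 601920*a^5*b + 39504*a^5*b^2 + 247248*a^6 + 31968*a^6*b + 11232*a^7)]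

lemma aux_c5 (a b : ℝ) (ha : 0 ≤ a) (hb : 0 ≤ b) : c5 (a+3) (a+b+4) < 0 := by
  have h : -(c5 (a+3) (a+b+4)) = 82295040 + 95479040*b + 46344988*b^2 + 12329996*b^3 + 1956044*b^4 + 185952*b^5 + 9840*b^6 + 224*b^7 + 190498240*a + 189269632*a*b + 76547564*a*b^2 + 16297372*a*b^3 + 1940508*a*b^4 + 123136*a*b^5 + 3264*a*b^6 + 188245508*a^2 + 155766228*a^2*b + 50401452*a^2*b^2 + 8051556*a^2*b^3 + 639636*a^2*b^4 + 20320*a^2*b^5 + 102943348*a^3 + 68124740*a^3*b + 16536844*a^3*b^2 + 1762116*a^3*b^3 + 70052*a^3*b^4 + 33647656*a^4 + 16699740*a^4*b + 2703752*a^4*b^2 + 144144*a^4*b^3 + 6573752*a^5 + 2175580*a^5*b + 176232*a^5*b^2 + 710836*a^6 + 117680*a^6*b + 32820*a^7 := by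
    unfold c5; ring
  nlinarith [h, (by positivity : (0:ℝ) < 82295040 + 95479040*b + 46344988*b^2 + 12329996*b^3 + 1956044*b^4 + 185952*b^5 + 9840*b^6 + 224*b^7 + 190498240*a + 189269632*a*b + 76547564*a*b^2 + 16297372*a*b^3 + 1940508*a*b^4 + 123136*a*b^5 + 3264*a*b^6 + 188245508*a^2 + 155766228*a^2*b + 50401452*a^2*b^2 + 8051556*a^2*b^3 + 639636*a^2*b^4 + 20320*a^2*b^5 + 102943348*a^3 + 68124740*a^3*b + 16536844*a^3*b^2 + 1762116*a^3*b^3 + 70052*a^3*b^4 + 33647656*a^4 + 16699740*a^4*b + 2703752*a^4*b^2 + 144144*a^4*b^3 + 6573752*a^5 + 2175580*a^5*b + 176232*a^5*b^2 + 710836*a^6 + 117680*a^6*b + 32820*a^7)]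

lemma aux_c3 (a b : ℝ) (ha : 0 ≤ a) (hb : 0 ≤ b) : c3 (a+3) (a+b+4) < 0 := by
  have h : -(c3 (a+3) (a+b+4)) = 20926208 + 32622720*b + 20540388*b^2 + 6834562*b^3 + 1310992*b^4 + 146196*b^5 + 8832*b^6 + 224*b^7 + 52197056*a + 68786592*a*b + 35753206*a*b^2 + 9461074*a*b^3 + 1356472*a*b^4 + 100680*a*b^5 + 3040*a*b^6 + 55365340*a^2 + 60049806*a^2*b + 24759950*a^2*b^2 + 4888398*a^2*b^3 + 465888*a^2*b^4 + 17268*a^2*b^5 + 32379450*a^3 + 27784318*a^3*b + 8527762*a^3*b^2 + 1117294*a^3*b^3 + 53112*a^3*b^4 + 11278610*a^4 + 7186766*a^4*b + 1460766*a^4*b^2 + 95312*a^4*b^3 + 2340358*a^5 + 985434*a^5*b + 99560*a^5*b^2 + 267922*a^6 + 55964*a^6*b + 13056*a^7 := by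
    unfold c3; ring
  nlinarith [h, (by positivity : (0:ℝ) < 20926208 + 32622720*b + 20540388*b^2 + 6834562*b^3 + 1310992*b^4 + 146196*b^5 + 8832*b^6 + 224*b^7 + 52197056*a + 68786592*a*b + 35753206*a*b^2 + 9461074*a*b^3 + 1356472*a*b^4 + 100680*a*b^5 + 3040*a*b^6 + 55365340*a^2 + 60049806*a^2*b + 24759950*a^2*b^2 + 4888398*a^2*b^3 + 465888*a^2*b^4 + 17268*a^2*b^5 + 32379450*a^3 + 27784318*a^3*b + 8527762*a^3*b^2 + 1117294*a^3*b^3 + 53112*a^3*b^4 + 11278610*a^4 + 7186766*a^4*b + 1460766*a^4*b^2 + 95312*a^4*b^3 + 2340358*a^5 + 985434*a^5*b + 99560*a^5*b^2 + 267922*a^6 + 55964*a^6*b + 13056*a^7)]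

lemma aux_c1 (a b : ℝ) (ha : 0 ≤ a) (hb : 0 ≤ b) : c1 (a+3) (a+b+4) < 0 := by
  have h : -(c1 (a+3) (a+b+4)) = 531840 + 1119472*b + 953288*b^2 + 422564*b^3 + 104910*b^4 + 14644*b^5 + 1072*b^6 + 32*b^7 + 1481680*a + 2618640*a*b + 1818140*a*b^2 + 631256*a*b^3 + 115482*a*b^4 + 10600*a*b^5 + 384*a*b^6 + 1753000*a^2 + 2528300*a^2*b + 1374612*a^2*b^2 + 350936*a^2*b^3 + 42106*a^2*b^4 + 1908*a^2*b^5 + 1141460*a^3 + 1289688*a^3*b + 515140*a^3*b^2 + 86072*a^3*b^3 + 5086*a^3*b^4 + 441710*a^4 + 366612*a^4*b + 95716*a^4*b^2 + 7860*a^4*b^3 + 101570*a^5 + 55072*a^5*b + 7056*a^5*b^2 + 12850*a^6 + 3416*a^6*b + 690*a^7 := by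
    unfold c1; ring
  nlinarith [h, (by positivity : (0:ℝ) < 531840 + 1119472*b + 953288*b^2 + 422564*b^3 + 104910*b^4 + 14644*b^5 + 1072*b^6 + 32*b^7 + 1481680*a + 2618640*a*b + 1818140*a*b^2 + 631256*a*b^3 + 115482*a*b^4 + 10600*a*b^5 + 384*a*b^6 + 1753000*a^2 + 2528300*a^2*b + 1374612*a^2*b^2 + 350936*a^2*b^3 + 42106*a^2*b^4 + 1908*a^2*b^5 + 1141460*a^3 + 1289688*a^3*b + 515140*a^3*b^2 + 86072*a^3*b^3 + 5086*a^3*b^4 + 441710*a^4 + 366612*a^4*b + 95716*a^4*b^2 + 7860*a^4*b^3 + 101570*a^5 + 55072*a^5*b + 7056*a^5*b^2 + 12850*a^6 + 3416*a^6*b + 690*a^7)]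

/-- for integers `l > k ≥ 3`, the even-degree coefficients of `p` are
strictly positive and the odd-degree coefficients are strictly negative. -/
theorem ppoly_coefficient_signs (k l : ℤ) (hk : 3 ≤ k) (hkl : k < l) :
    (0 < c8 (k : ℝ) (l : ℝ) ∧ 0 < c6 (k : ℝ) (l : ℝ) ∧ 0 < c4 (k : ℝ) (l : ℝ) ∧
      0 < c2 (k : ℝ) (l : ℝ) ∧ 0 < c0 (k : ℝ) (l : ℝ)) ∧
    (c7 (k : ℝ) (l : ℝ) < 0 ∧ c5 (k : ℝ) (l : ℝ) < 0 ∧ c3 (k : ℝ) (l : ℝ) < 0 ∧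
      c1 (k : ℝ) (l : ℝ) < 0) := by
  have hk3 : (3:ℝ) ≤ (k:ℝ) := by exact_mod_cast hk
  have hkl' : (k:ℝ) + 1 ≤ (l:ℝ) := by exact_mod_cast hkl
  have ha : 0 ≤ (k:ℝ) - 3 := by linarith
  have hb : 0 ≤ (l:ℝ) - (k:ℝ) - 1 := by linarith
  have hK : ((k:ℝ)-3)+3 = (k:ℝ) := by ring
  have hL : ((k:ℝ)-3)+((l:ℝ)-(k:ℝ)-1)+4 = (l:ℝ) := by ring
  have hc8 := aux_c8 ((k:ℝ)-3) ((l:ℝ)-(k:ℝ)-1) ha hb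
  rw [hL, hK] at hc8
  have hc6 := aux_c6 ((k:ℝ)-3) ((l:ℝ)-(k:ℝ)-1) ha hb
  rw [hL, hK] at hc6
  have hc4 := aux_c4 ((k:ℝ)-3) ((l:ℝ)-(k:ℝ)-1) ha hb
  rw [hL, hK] at hc4
  have hc2 := aux_c2 ((k:ℝ)-3) ((l:ℝ)-(k:ℝ)-1) ha hb
  rw [hL, hK] at hc2
  have hc0 := aux_c0 ((k:ℝ)-3) ((l:ℝ)-(k:ℝ)-1) ha hb
  rw [hL, hK] at hc0
  have hc7 := aux_c7 ((k:ℝ)-3) ((l:ℝ)-(k:ℝ)-1) ha hb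
  rw [hL, hK] at hc7
  have hc5 := aux_c5 ((k:ℝ)-3) ((l:ℝ)-(k:ℝ)-1) ha hb
  rw [hL, hK] at hc5
  have hc3 := aux_c3 ((k:ℝ)-3) ((l:ℝ)-(k:ℝ)-1) ha hb
  rw [hL, hK] at hc3
  have hc1 := aux_c1 ((k:ℝ)-3) ((l:ℝ)-(k:ℝ)-1) ha hb
  rw [hL, hK] at hc1
  exact ⟨⟨hc8, hc6, hc4, hc2, hc0⟩, hc7, hc5, hc3, hc1⟩
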